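/- For a Tamari interval I1 = [P1,Q1] of size n1 with a distinguished contact splitting P1 = P1^ℓ P1^r into two Dyck paths, the pair [u P1^ℓ d P1^r, u Q1 d] is a Tamari interval of size n1+1. -/

import Mathlib

/-- A step of a Dyck path: `u` (up) or `d` (down). -/
inductive Step where
  | u : Step
  | d : Step
deriving DecidableEq, Repr

open Step

/-- Number of up steps of a word. -/
def countU (w : List Step) : ℕ := w.count u

/-- Number of down steps of a word. -/
def countD (w : List Step) : ℕ := w.count d

/-- A word over {u,d} is a Dyck path if it has as many u's as d's and
every prefix has at least as many u's as d's. -/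
def IsDyck (w : List Step) : Prop :=
  countU w = countD w ∧ ∀ p : List Step, p <+: w → countD p ≤ countU p

/-- Number of occurrences of the two-letter factor `ab` in `w`. -/
def pairCount (a b : Step) (w : List Step) : ℕ := (w.zip w.tail).count (a, b)

/-- The right-rotation covering relation of the Tamari lattice:
`P = V d P1 W` is turned into `P' = V P1 d W` where `P1` is a non-empty
Dyck path. -/
def Rotation (P P' : List Step) : Prop :=
  ∃ V W P1 : List Step, IsDyck P1 ∧ P1 ≠ [] ∧
    P = V ++ [Step.d] ++ P1 ++ W ∧ P' = V ++ P1 ++ [Step.d] ++ W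

/-- The Tamari order: reflexive-transitive closure of right rotation. -/
def Tamari : List Step → List Step → Prop := Relation.ReflTransGen Rotation

/-! Enclosing paths between an up and a down step maps rotations to rotations, so
`u P1 d ≤ u Q1 d`. Below it, `u P1ℓ d P1r ≤ u P1ℓ P1r d = u P1 d` by a single rotation moving the
new down step past the Dyck path `P1r` (none if `P1r` is empty). -/

lemma prefix_append_cases {α : Type*} {p A B : List α} (h : p <+: A ++ B) :
    p <+: A ∨ ∃ r, r <+: B ∧ p = A ++ r := by
  rcases le_or_gt p.length A.length with hle | hlt
  · exact Or.inl (List.prefix_of_prefix_length_le h (List.prefix_append A B) hle)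
  · obtain ⟨r, rfl⟩ := List.prefix_of_prefix_length_le (List.prefix_append A B) h hlt.le
    exact Or.inr ⟨r, (List.prefix_append_right_inj A).mp (by simpa using h), rfl⟩

@[simp] lemma countU_append (a b : List Step) : countU (a ++ b) = countU a + countU b :=
  List.count_append ..

@[simp] lemma countD_append (a b : List Step) : countD (a ++ b) = countD a + countD b :=
  List.count_append ..

@[simp] lemma countU_cons_u (w : List Step) : countU (u :: w) = countU w + 1 := by simp [countU]
@[simp] lemma countU_cons_d (w : List Step) : countU (d :: w) = countU w := by simp [countU]
@[simp] lemma countD_cons_u (w : List Step) : countD (u :: w) = countD w := by simp [countD]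
@[simp] lemma countD_cons_d (w : List Step) : countD (d :: w) = countD w + 1 := by simp [countD]
@[simp] lemma countU_nil : countU [] = 0 := rfl
@[simp] lemma countD_nil : countD [] = 0 := rfl

namespace IsDyck

variable {A B : List Step}

lemma append (hA : IsDyck A) (hB : IsDyck B) : IsDyck (A ++ B) := by
  refine ⟨by simp [hA.1, hB.1], fun p hp => ?_⟩
  rcases prefix_append_cases hp with hpA | ⟨r, hrB, rfl⟩
  · exact hA.2 p hpA
  · have := hB.2 r hrB
    simp only [countU_append, countD_append, hA.1]
    omega

lemma wrap (hA : IsDyck A) : IsDyck ([u] ++ A ++ [d]) := by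
  refine ⟨by simp [hA.1], fun p hp => ?_⟩
  rw [List.append_assoc] at hp
  rcases prefix_append_cases hp with hpu | ⟨r, hr, rfl⟩
  · have : countD p ≤ countD [u] := hpu.sublist.count_le d
    simp only [countD_cons_u, countD_nil] at this
    omega
  · rcases List.prefix_concat_iff.mp hr with rfl | hrA
    · simp [hA.1]
    · have := hA.2 r hrA
      simp only [List.cons_append, List.nil_append, countD_cons_u, countU_cons_u]
      omega

end IsDyck

lemma Rotation.wrap {P P' : List Step} (h : Rotation P P') :
    Rotation ([u] ++ P ++ [d]) ([u] ++ P' ++ [d]) := by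
  obtain ⟨V, W, X, hX, hne, rfl, rfl⟩ := h
  exact ⟨[u] ++ V, W ++ [d], X, hX, hne, by simp, by simp⟩

lemma Tamari.wrap {P P' : List Step} (h : Tamari P P') :
    Tamari ([u] ++ P ++ [d]) ([u] ++ P' ++ [d]) :=
  Relation.ReflTransGen.lift (fun P => [u] ++ P ++ [d]) (fun _ _ => Rotation.wrap) _ _ h

lemma tamari_wrap_append_le_wrap (A : List Step) {B : List Step} (hB : IsDyck B) :
    Tamari ([u] ++ A ++ [d] ++ B) ([u] ++ (A ++ B) ++ [d]) := by
  rcases eq_or_ne B [] with rfl | hne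
  · simp only [List.append_nil]
    exact Relation.ReflTransGen.refl
  · exact Relation.ReflTransGen.single ⟨[u] ++ A, [], B, hB, hne, by simp, by simp⟩

theorem interval_augment_general (n1 : ℕ) (P1 Q1 P1l P1r : List Step)
    (hQ1 : IsDyck Q1)
    (hn1 : countU P1 = n1)
    (hPQ : Tamari P1 Q1)
    (hsplit : P1 = P1l ++ P1r) (hl : IsDyck P1l) (hr : IsDyck P1r) :
    IsDyck ([Step.u] ++ P1l ++ [Step.d] ++ P1r) ∧
    IsDyck ([Step.u] ++ Q1 ++ [Step.d]) ∧
    countU ([Step.u] ++ P1l ++ [Step.d] ++ P1r) = n1 + 1 ∧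
    Tamari ([Step.u] ++ P1l ++ [Step.d] ++ P1r) ([Step.u] ++ Q1 ++ [Step.d]) := by
  subst hsplit hn1
  refine ⟨hl.wrap.append hr, hQ1.wrap, by simp, ?_⟩
  exact (tamari_wrap_append_le_wrap P1l hr).trans hPQ.wrap

/-- Augmentation of Tamari intervals: if `[P1,Q1]` is a Tamari
interval of size `n1` and a distinguished contact splits `P1 = P1ℓ P1r` into
two Dyck paths, then `[u P1ℓ d P1r, u Q1 d]` is a Tamari interval of size
`n1 + 1`. -/
theorem interval_augment (n1 : ℕ) (P1 Q1 P1l P1r : List Step)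
    (hP1 : IsDyck P1) (hQ1 : IsDyck Q1)
    (hn1 : countU P1 = n1) (hn1' : countU Q1 = n1)
    (hPQ : Tamari P1 Q1)
    (hsplit : P1 = P1l ++ P1r) (hl : IsDyck P1l) (hr : IsDyck P1r) :
    IsDyck ([Step.u] ++ P1l ++ [Step.d] ++ P1r) ∧
    IsDyck ([Step.u] ++ Q1 ++ [Step.d]) ∧
    countU ([Step.u] ++ P1l ++ [Step.d] ++ P1r) = n1 + 1 ∧
    Tamari ([Step.u] ++ P1l ++ [Step.d] ++ P1r) ([Step.u] ++ Q1 ++ [Step.d]) :=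
  interval_augment_general n1 P1 Q1 P1l P1r hQ1 hn1 hPQ hsplit hl hr
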